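/- arXiv:math/0111323 — 2 statements merged into one kernel-verified Lean document; each statement's English description precedes it below -/
import Mathlib

section
/- For a Young diagram λ, define the content of a cell c in row i and column j (1-indexed) as cn(c) = j - i, and define c_λ = δ + (s - s⁻¹)(α·Σ_{c∈λ} s^{2cn(c)} - α⁻¹·Σ_{c∈λ} s^{-2cn(c)}) in ℚ(α,s), where δ = (α-α⁻¹)/(s-s⁻¹) + 1. Then the map λ ↦ c_λ is injective on the set of all Young diagrams: if λ ≠ λ′ then c_λ ≠ c_{λ′}. -/
open scoped BigOperators

noncomputable abbrev Kf : Type := FractionRing (MvPolynomial (Fin 2) ℚ)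

noncomputable def α : Kf := algebraMap (MvPolynomial (Fin 2) ℚ) Kf (MvPolynomial.X 0)
noncomputable def s : Kf := algebraMap (MvPolynomial (Fin 2) ℚ) Kf (MvPolynomial.X 1)
noncomputable def δ : Kf := (α - α⁻¹) / (s - s⁻¹) + 1

/-- content of a cell -/
def cn (c : ℕ × ℕ) : ℤ := (c.2 : ℤ) - (c.1 : ℤ)

/-- the eigenvalue `c_λ` of the Hopf map for a Young diagram -/
noncomputable def cY (lam : YoungDiagram) : Kf :=
  δ + (s - s⁻¹) *
    (α * ∑ c ∈ lam.cells, s ^ (2 * cn c) - α⁻¹ * ∑ c ∈ lam.cells, s ^ (-(2 * cn c)))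

/-!
Write `cY λ = δ + (s - s⁻¹) (α F_λ(s²) - α⁻¹ F_λ(s⁻²))`, where `F_λ = ∑_{c ∈ λ} T^{cn c}` is the
content generating Laurent polynomial. Since `α` and `s` are algebraically independent, an identity
`α² f(s²) = g(s²)` between Laurent polynomials forces `f = 0`; so `cY` determines `F_λ`, i.e. the
number of cells of each content. Finally a diagram is determined by these numbers: `(i, j) ∈ λ`
iff the diagonal of content `j - i` has more than `min i j` cells.
-/

open Finset Polynomial LaurentPolynomial

namespace YoungDiagram

def contentCount (l : YoungDiagram) (t : ℤ) : ℕ := #{c ∈ l.cells | cn c = t}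

theorem mem_iff_min_lt_contentCount (l : YoungDiagram) (i j : ℕ) :
    (i, j) ∈ l ↔ min i j < l.contentCount (j - i) := by
  set S : Finset (ℕ × ℕ) := {c ∈ l.cells | cn c = j - i}
  have mem_S (c : ℕ × ℕ) : c ∈ S ↔ c ∈ l ∧ (c.2 : ℤ) - c.1 = j - i := by
    rw [mem_filter, mem_cells, cn]
  constructor
  · intro hij
    refine Nat.lt_of_succ_le <| le_card_of_inj_on_range (fun r => (i - r, j - r)) ?_ ?_
    · intro r hr
      exact (mem_S _).2 ⟨l.up_left_mem (Nat.sub_le i r) (Nat.sub_le j r) hij, by omega⟩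
    · intro r₁ hr₁ r₂ hr₂ h
      simp only [Prod.mk.injEq] at h
      omega
  · intro hlt
    by_contra hij
    have above_left (c : ℕ × ℕ) (hc : c ∈ S) : c.1 < i ∧ c.2 < j := by
      rw [mem_S] at hc
      by_contra! hle
      exact hij (l.up_left_mem (i1 := i) (j1 := j) (by omega) (by omega) hc.1)
    have hi : #S ≤ #(range i) := card_le_card_of_injOn Prod.fst
      (fun c hc => mem_range.2 (above_left c hc).1)
      (fun c hc d hd h => by simp only [mem_coe, mem_S] at hc hd; exact Prod.ext h (by omega))
    have hj : #S ≤ #(range j) := card_le_card_of_injOn Prod.snd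
      (fun c hc => mem_range.2 (above_left c hc).2)
      (fun c hc d hd h => by simp only [mem_coe, mem_S] at hc hd; exact Prod.ext (by omega) h)
    rw [card_range] at hi hj
    exact absurd hlt (not_lt.2 (le_min hi hj))

theorem ext_of_contentCount {l m : YoungDiagram}
    (h : ∀ t, l.contentCount t = m.contentCount t) : l = m := by
  ext ⟨i, j⟩
  simp only [mem_cells, mem_iff_min_lt_contentCount, h]

end YoungDiagram

theorem LaurentPolynomial.coeff_sum_T {ι R : Type*} [Semiring R] (F : Finset ι) (e : ι → ℤ)
    (t : ℤ) : (∑ i ∈ F, (T (e i) : R[T;T⁻¹])).coeff t = #{i ∈ F | e i = t} := by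
  rw [AddMonoidAlgebra.coeff_sum, Finsupp.finsetSum_apply, card_filter, Nat.cast_sum]
  refine sum_congr rfl fun i _ => ?_
  rw [T, AddMonoidAlgebra.coeff_single, Finsupp.single_apply]
  split_ifs <;> simp_all

theorem transcendental_s : Transcendental ℚ s :=
  (transcendental_algebraMap_iff (IsFractionRing.injective (MvPolynomial (Fin 2) ℚ) Kf)).2
    (MvPolynomial.transcendental_X ℚ 1)

theorem s_ne_zero : s ≠ 0 := fun h => transcendental_s (h ▸ isAlgebraic_zero)

theorem s_sub_inv_ne_zero : s - s⁻¹ ≠ 0 := by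
  have hsq : s ^ 2 ≠ 1 := fun h => transcendental_s.pow two_pos (h ▸ isAlgebraic_one)
  rw [show s - s⁻¹ = (s ^ 2 - 1) / s by field_simp [s_ne_zero]]
  exact div_ne_zero (sub_ne_zero.2 hsq) s_ne_zero

theorem α_ne_zero : α ≠ 0 := by
  rw [α, Ne, map_eq_zero_iff _ (IsFractionRing.injective (MvPolynomial (Fin 2) ℚ) Kf)]
  exact MvPolynomial.X_ne_zero 0

/-- Evaluation at `T = s²`. -/
noncomputable def evalSSq : ℚ[T;T⁻¹] →+* Kf :=
  LaurentPolynomial.eval₂ (algebraMap ℚ Kf) (Units.mk0 (s ^ 2) (pow_ne_zero 2 s_ne_zero))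

theorem evalSSq_T (n : ℤ) : evalSSq (T n) = s ^ (2 * n) := by
  rw [evalSSq, eval₂_T, Units.val_zpow_eq_zpow_val, Units.val_mk0, zpow_mul, zpow_two, sq]

theorem evalSSq_toLaurent (p : ℚ[X]) : evalSSq (toLaurent p) = aeval (s ^ 2) p := by
  rw [evalSSq, eval₂_toLaurent, aeval_def, Units.val_mk0]

theorem eq_zero_of_α_sq_mul_aeval_eq {p q : ℚ[X]}
    (h : α ^ 2 * aeval (s ^ 2) p = aeval (s ^ 2) q) : p = 0 := by
  let ι : ℚ[X] →ₐ[ℚ] MvPolynomial (Fin 2) ℚ := aeval (MvPolynomial.X 1 ^ 2)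
  have ι_injective : Function.Injective ι :=
    transcendental_iff_injective.1 ((MvPolynomial.transcendental_X ℚ 1).pow two_pos)
  have hι : MvPolynomial.X 0 ^ 2 * ι p = ι q := by
    apply IsFractionRing.injective (MvPolynomial (Fin 2) ℚ) Kf
    dsimp only [ι]
    rw [map_mul, map_pow, ← aeval_algebraMap_apply, ← aeval_algebraMap_apply, map_pow]
    exact h
  -- substituting `0` for the first variable kills the left-hand side and fixes `ι q`
  let kill₀ : MvPolynomial (Fin 2) ℚ →ₐ[ℚ] MvPolynomial (Fin 2) ℚ :=
    MvPolynomial.aeval ![0, MvPolynomial.X 1]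
  have hq : 0 = ι q := by
    simpa [ι, kill₀, ← aeval_algHom_apply] using congrArg kill₀ hι
  rw [← hq, mul_eq_zero] at hι
  exact ι_injective (by simpa using hι)

theorem eq_zero_of_α_sq_mul_evalSSq_eq {f g : ℚ[T;T⁻¹]} (h : α ^ 2 * evalSSq f = evalSSq g) :
    f = 0 := by
  obtain ⟨n, p, hp⟩ := exists_T_pow f
  obtain ⟨m, q, hq⟩ := exists_T_pow g
  have hpq : α ^ 2 * aeval (s ^ 2) (p * X ^ m) = aeval (s ^ 2) (q * X ^ n) := by
    simp only [← evalSSq_toLaurent, map_mul, hp, hq, toLaurent_X_pow]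
    linear_combination evalSSq (T n) * evalSSq (T m) * h
  have hp0 : p = 0 := by
    simpa [pow_ne_zero] using eq_zero_of_α_sq_mul_aeval_eq hpq
  rw [hp0, map_zero, eq_comm, (isUnit_T n).mul_left_eq_zero] at hp
  exact hp

noncomputable def contentPoly (l : YoungDiagram) : ℚ[T;T⁻¹] := ∑ c ∈ l.cells, T (cn c)

theorem contentPoly_injective : Function.Injective contentPoly := by
  intro l m h
  refine YoungDiagram.ext_of_contentCount fun t => ?_
  have := congrArg (·.coeff t) h
  simpa only [contentPoly, coeff_sum_T, Nat.cast_inj, YoungDiagram.contentCount] using this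

theorem cY_eq_evalSSq (l : YoungDiagram) : cY l = δ + (s - s⁻¹) *
    (α * evalSSq (contentPoly l) - α⁻¹ * evalSSq (invert (contentPoly l))) := by
  simp only [cY, contentPoly, map_sum, invert_T, evalSSq_T, mul_neg]

theorem cY_injective : Function.Injective cY := by
  intro l m h
  simp only [cY_eq_evalSSq] at h
  have h' := mul_left_cancel₀ s_sub_inv_ne_zero (add_left_cancel h)
  have key : α ^ 2 * evalSSq (contentPoly l - contentPoly m) =
      evalSSq (invert (contentPoly l) - invert (contentPoly m)) := by
    have := α_ne_zero
    simp only [map_sub]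
    field_simp at h'
    linear_combination h'
  exact contentPoly_injective (sub_eq_zero.1 (eq_zero_of_α_sq_mul_evalSSq_eq key))
end

section
/- Let λ and μ be distinct Young diagrams of the same size n. Then the multisets of contents {cn(c) : c ∈ λ} and {cn(c) : c ∈ μ} together with the data (Σ_c s^{2cn(c)}, Σ_c s^{-2cn(c)}) as Laurent polynomials in ℤ[s, s⁻¹] distinguish them: specifically, Σ_{c∈λ} s^{2cn(c)} ≠ Σ_{c∈μ} s^{2cn(c)} as elements of ℤ[s, s⁻¹]. -/
open LaurentPolynomial Finset in
private lemma row_telescope (r i : ℕ) :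
    (T 2 - 1) * ∑ j ∈ range r, (T (2 * cn (i, j)) : LaurentPolynomial ℤ)
      = T (2 * ((r : ℤ) - i)) - T (2 * (0 - (i : ℤ))) := by
  rw [Finset.mul_sum]
  have : ∀ j ∈ range r, (T 2 - 1) * (T (2 * cn (i, j)) : LaurentPolynomial ℤ)
      = (fun j : ℕ => (T (2 * ((j : ℤ) - i)) : LaurentPolynomial ℤ)) (j + 1)
        - (fun j : ℕ => (T (2 * ((j : ℤ) - i)) : LaurentPolynomial ℤ)) j := by
    intro j _
    simp only [cn, sub_mul, one_mul, ← T_add]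
    congr 2
    push_cast
    ring
  rw [Finset.sum_congr rfl this,
    Finset.sum_range_sub (f := fun j : ℕ => (T (2 * ((j : ℤ) - i)) : LaurentPolynomial ℤ))]
  simp

open LaurentPolynomial Finset in
private lemma cells_sum_rows (lam : YoungDiagram) (N : ℕ)
    (hN : ∀ i, N ≤ i → lam.rowLen i = 0) :
    ∑ c ∈ lam.cells, (T (2 * cn c) : LaurentPolynomial ℤ)
      = ∑ i ∈ range N, ∑ j ∈ range (lam.rowLen i), (T (2 * cn (i, j)) : LaurentPolynomial ℤ) := by
  have hdec : lam.cells = (range N).biUnion (fun i => lam.row i) := by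
    ext ⟨i, j⟩
    simp only [Finset.mem_biUnion, Finset.mem_range, YoungDiagram.mem_row_iff,
      YoungDiagram.mem_cells]
    constructor
    · intro h
      refine ⟨i, ?_, h, rfl⟩
      by_contra hi
      push_neg at hi
      have := hN i hi
      rw [YoungDiagram.mem_iff_lt_rowLen] at h
      omega
    · rintro ⟨k, _, h, rfl⟩; exact h
  rw [hdec, Finset.sum_biUnion]
  · apply Finset.sum_congr rfl
    intro i _
    rw [YoungDiagram.row_eq_prod, Finset.sum_product]
    simp
  · intro a _ b _ hab
    simp only [Finset.disjoint_left, YoungDiagram.mem_row_iff]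
    rintro c ⟨_, rfl⟩ ⟨_, h⟩
    exact hab h

open LaurentPolynomial Finset in
private lemma support_T_sum (g : ℕ → ℤ) (N : ℕ) (hg : Function.Injective g) :
    (∑ i ∈ range N, (T (g i) : LaurentPolynomial ℤ)).coeff.support = (range N).image g := by
  rw [AddMonoidAlgebra.coeff_sum, Finsupp.support_sum_eq_biUnion]
  · ext k
    simp only [Finset.mem_biUnion, Finset.mem_image]
    constructor
    · rintro ⟨i, hi, hk⟩
      rw [T, AddMonoidAlgebra.coeff_single, Finsupp.support_single_ne_zero _ one_ne_zero, Finset.mem_singleton] at hk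
      exact ⟨i, hi, hk.symm⟩
    · rintro ⟨i, hi, rfl⟩
      exact ⟨i, hi, by rw [T, AddMonoidAlgebra.coeff_single, Finsupp.support_single_ne_zero _ one_ne_zero]; simp⟩
  · intro a b hab
    rw [T, T, AddMonoidAlgebra.coeff_single, AddMonoidAlgebra.coeff_single, Finsupp.support_single_ne_zero _ one_ne_zero,
      Finsupp.support_single_ne_zero _ one_ne_zero]
    simp only [Finset.disjoint_singleton]
    exact fun h => hab (hg h)

open LaurentPolynomial in
theorem content_sums_distinguish_partitions (lam mu : YoungDiagram)
    (hcard : lam.card = mu.card) (hne : lam ≠ mu) :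
    ∑ c ∈ lam.cells, (T (2 * cn c) : LaurentPolynomial ℤ) ≠
      ∑ c ∈ mu.cells, (T (2 * cn c) : LaurentPolynomial ℤ) := by
  intro hsum
  apply hne
  set N := lam.card with hNdef
  have hzero : ∀ (nu : YoungDiagram), nu.card = N → ∀ i, N ≤ i → nu.rowLen i = 0 := by
    intro nu hnu i hi
    by_contra h
    have hmem : (i, 0) ∈ nu := by
      rw [YoungDiagram.mem_iff_lt_rowLen]; omega
    have h1 : i < nu.colLen 0 := YoungDiagram.mem_iff_lt_colLen.mp hmem
    have h2 : nu.colLen 0 ≤ nu.card := by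
      rw [YoungDiagram.colLen_eq_card]
      exact Finset.card_filter_le _ _
    omega
  have hlamN := hzero lam rfl
  have hmuN := hzero mu hcard.symm
  set g : ℕ → ℤ := fun i => 2 * ((lam.rowLen i : ℤ) - i) with hg
  set h : ℕ → ℤ := fun i => 2 * ((mu.rowLen i : ℤ) - i) with hh
  have hganti : StrictAnti g := by
    intro a b hab
    have := lam.rowLen_anti a b hab.le
    simp only [hg]
    omega
  have hhanti : StrictAnti h := by
    intro a b hab
    have := mu.rowLen_anti a b hab.le
    simp only [hh]
    omega
  have hA : ∑ i ∈ Finset.range N, (T (g i) : LaurentPolynomial ℤ)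
      = ∑ i ∈ Finset.range N, (T (h i) : LaurentPolynomial ℤ) := by
    have hmul : (T 2 - 1) * (∑ c ∈ lam.cells, (T (2 * cn c) : LaurentPolynomial ℤ))
        = (T 2 - 1) * (∑ c ∈ mu.cells, (T (2 * cn c) : LaurentPolynomial ℤ)) := by rw [hsum]
    rw [cells_sum_rows lam N hlamN, cells_sum_rows mu N hmuN, Finset.mul_sum,
      Finset.mul_sum] at hmul
    simp_rw [row_telescope, Finset.sum_sub_distrib] at hmul
    exact sub_left_inj.mp hmul
  have himg : (Finset.range N).image g = (Finset.range N).image h := by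
    rw [← support_T_sum g N hganti.injective, ← support_T_sum h N hhanti.injective, hA]
  have hrange : Set.range (fun k : Fin N => g k) = Set.range (fun k : Fin N => h k) := by
    have aux : ∀ (f : ℕ → ℤ), Set.range (fun k : Fin N => f k)
        = ((Finset.range N).image f : Finset ℤ) := by
      intro f
      ext x
      simp only [Set.mem_range, Finset.coe_image, Set.mem_image, Finset.mem_coe,
        Finset.mem_range]
      constructor
      · rintro ⟨k, rfl⟩; exact ⟨k, k.2, rfl⟩
      · rintro ⟨k, hk, rfl⟩; exact ⟨⟨k, hk⟩, rfl⟩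
    rw [aux g, aux h, himg]
  have hganti' : StrictAnti (fun k : Fin N => g k) := fun a b hab => hganti hab
  have hhanti' : StrictAnti (fun k : Fin N => h k) := fun a b hab => hhanti hab
  have hfun : (fun k : Fin N => g k) = (fun k : Fin N => h k) :=
    (StrictAnti.range_inj hganti' hhanti').mp hrange
  have hrow : ∀ i, lam.rowLen i = mu.rowLen i := by
    intro i
    by_cases hi : i < N
    · have := congrFun hfun ⟨i, hi⟩
      simp only [hg, hh] at this
      omega
    · rw [hlamN i (by omega), hmuN i (by omega)]
  ext ⟨i, j⟩
  rw [YoungDiagram.mem_cells, YoungDiagram.mem_cells, YoungDiagram.mem_iff_lt_rowLen,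
    YoungDiagram.mem_iff_lt_rowLen, hrow]
end
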